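/- arXiv:2301.13370 — 2 statements merged into one kernel-verified Lean document; each statement's English description precedes it below -/
import Mathlib

section
/- Let l ∈ [L], i ∈ [N_l], and c ∈ ℝ, and suppose that the pre-activation function τ_l has bias parameters. Then for every finite nonempty M ⊆ ℝ, the number of parameter vectors w ∈ M^W with y_{l,i}(w) = c is at most |M|^{W−1}. -/
open Filter Topology Set

/-- The parameter space `ℝ^W = ℝ^{W_1} × ⋯ × ℝ^{W_L}` of a neural network. -/
abbrev Params (L : ℕ) (Wd : Fin L → ℕ) : Type := (l : Fin L) → Fin (Wd l) → ℝ

/-- `f : ℝ → ℝ` is piecewise-analytic: there are finitely many pairwise disjoint nonempty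
intervals covering `ℝ` on each of which `f` agrees with an analytic function `ℝ → ℝ`. -/
def PiecewiseAnalytic (f : ℝ → ℝ) : Prop :=
  ∃ (n : ℕ) (A : Fin n → Set ℝ) (g : Fin n → ℝ → ℝ),
    (∀ i, (A i).Nonempty ∧ (A i).OrdConnected) ∧
    (Pairwise fun i j => Disjoint (A i) (A j)) ∧
    (⋃ i, A i) = Set.univ ∧
    (∀ i x, AnalyticAt ℝ (g i) x) ∧
    (∀ i, ∀ x ∈ A i, f x = g i x)

/-- `g` is an extended derivative of `f`. -/
def IsExtendedDeriv (f g : ℝ → ℝ) : Prop :=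
  ∀ x, DifferentiableAt ℝ f x → g x = deriv f x

/-- An extended derivative `g` of `f` is consistent. -/
def IsConsistentWith (f g : ℝ → ℝ) : Prop :=
  ∀ x, ¬DifferentiableAt ℝ f x →
    ∃ u : ℕ → ℝ, Tendsto u atTop (𝓝 x) ∧ (∀ k, DifferentiableAt ℝ f (u k)) ∧
      Tendsto (fun k => deriv f (u k)) atTop (𝓝 (g x))

/-- A pre-activation function `τ : ℝ^n × ℝ^m → ℝ^k` has bias parameters. -/
def HasBiasParams {n m k : ℕ} (τ : (Fin n → ℝ) × (Fin m → ℝ) → Fin k → ℝ) : Prop :=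
  ∃ (h : k ≤ m) (f : Fin k → (Fin n → ℝ) → (Fin (m - k) → ℝ) → ℝ),
    ∀ (i : Fin k) (x : Fin n → ℝ) (u : Fin m → ℝ),
      τ (x, u) i =
        f i x (fun j => u (Fin.castLE (Nat.sub_le m k) j)) +
          u ⟨m - k + i.val, by have := i.isLt; omega⟩

/-- A pre-activation function `τ : ℝ^n × ℝ^m → ℝ^k` is well-structured biaffine. -/
def WellStructuredBiaffine {n m k : ℕ} (τ : (Fin n → ℝ) × (Fin m → ℝ) → Fin k → ℝ) : Prop :=
  ∃ (A : Fin k → Matrix (Fin n) (Fin m) ℝ) (c : Fin k → ℝ),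
    (∀ (i : Fin k) (x : Fin n → ℝ) (u : Fin m → ℝ),
      τ (x, u) i = (∑ a, ∑ b, x a * A i a b * u b) + c i) ∧
    (∀ (i : Fin k) (b : Fin m), {a : Fin n | A i a b ≠ 0}.Subsingleton)

/-- The diagonal continuous linear map `ℝ^n → ℝ^n` with diagonal entries `d`. -/
noncomputable def diagCLM {n : ℕ} (d : Fin n → ℝ) : (Fin n → ℝ) →L[ℝ] (Fin n → ℝ) :=
  ContinuousLinearMap.pi fun i => d i • ContinuousLinearMap.proj i

/-- The set of points of non-differentiability of `f : ℝ → ℝ`. -/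
def ndfSet (f : ℝ → ℝ) : Set ℝ := {x | ¬DifferentiableAt ℝ f x}

/-- The set of points where `f : ℝ → ℝ` is not continuously differentiable. -/
def ncdfSet (f : ℝ → ℝ) : Set ℝ := {x | ¬ContDiffAt ℝ 1 f x}

/-- The boundary of the zero set of `f : ℝ → ℝ`. -/
def bdzSet (f : ℝ → ℝ) : Set ℝ := frontier {x | f x = 0}


private lemma myNcardPi {ι : Type*} [Fintype ι] {β : ι → Type*} (s : ∀ a, Set (β a)) :
    (Set.pi Set.univ s).ncard = ∏ a, (s a).ncard := by
  rw [← Nat.card_coe_set_eq, Nat.card_congr (Equiv.Set.univPi s), Nat.card_pi]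
  simp [Nat.card_coe_set_eq]

/-- If `τ_l` has bias parameters, then for every finite nonempty `M ⊆ ℝ`,
the number of parameter vectors `w ∈ M^W` with `y_{l,i}(w) = c₀` is at most `|M|^{W−1}`. -/
theorem stmt15
    (L : ℕ) (hL : 1 ≤ L)
    (N : ℕ → ℕ) (hN : ∀ l, 1 ≤ N l)
    (Wd : Fin L → ℕ) (hW : 1 ≤ ∑ l, Wd l)
    (τ : (l : Fin L) → (Fin (N l.val) → ℝ) × (Fin (Wd l) → ℝ) → Fin (N (l.val + 1)) → ℝ)
    (hτ : ∀ l p, AnalyticAt ℝ (τ l) p)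
    (σ : (l : Fin L) → Fin (N (l.val + 1)) → ℝ → ℝ)
    (hσc : ∀ l i, Continuous (σ l i))
    (hσpa : ∀ l i, PiecewiseAnalytic (σ l i))
    (c : Fin (N 0) → ℝ)
    (z : (l : ℕ) → Params L Wd → Fin (N l) → ℝ)
    (y : (l : Fin L) → Params L Wd → Fin (N (l.val + 1)) → ℝ)
    (hz0 : ∀ w, z 0 w = c)
    (hy : ∀ l w, y l w = τ l (z l.val w, w l))
    (hz : ∀ l w i, z (l.val + 1) w i = σ l i (y l w i))
    (l : Fin L) (i : Fin (N (l.val + 1))) (c0 : ℝ)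
    (hbias : HasBiasParams (τ l))
    (M : Set ℝ) (hMfin : M.Finite) (hMne : M.Nonempty) :
    ({w : Params L Wd | (∀ l' j, w l' j ∈ M) ∧ y l w i = c0}).ncard ≤
      M.ncard ^ ((∑ l' : Fin L, Wd l') - 1) := by
  classical
  obtain ⟨hkm, f, hf⟩ := hbias
  have hk1 : 1 ≤ N (l.val + 1) := hN _
  have hblt : Wd l - N (l.val + 1) + i.val < Wd l := by have := i.isLt; omega
  set b : Fin (Wd l) := ⟨Wd l - N (l.val + 1) + i.val, hblt⟩ with hbdef
  obtain ⟨m₀, hm₀⟩ := hMne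
  -- z at layer t depends only on parameters of layers < t
  have key : ∀ t : ℕ, t ≤ L → ∀ w w' : Params L Wd,
      (∀ l'' : Fin L, l''.val < t → w l'' = w' l'') → z t w = z t w' := by
    intro t
    induction t with
    | zero => intro _ w w' _; rw [hz0, hz0]
    | succ t ih =>
      intro ht w w' hww
      have htL : t < L := by omega
      have hzz : z t w = z t w' := ih (by omega) w w' (fun l'' h => hww l'' (by omega))
      funext j
      have e1 := hz ⟨t, htL⟩ w j
      have e2 := hz ⟨t, htL⟩ w' j
      rw [e1, e2, hy, hy, hzz, hww ⟨t, htL⟩ (by simp)]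
  set S := {w : Params L Wd | (∀ l' j, w l' j ∈ M) ∧ y l w i = c0} with hSdef
  set φ : Params L Wd → Params L Wd :=
    fun w => Function.update w l (Function.update (w l) b m₀) with hφdef
  -- value of y l · i via the bias decomposition
  have hyval : ∀ w : Params L Wd,
      y l w i = f i (z l.val w)
        (fun j => w l (Fin.castLE (Nat.sub_le (Wd l) (N (l.val + 1))) j)) + w l b := by
    intro w
    rw [hy, hf]
  have hinj : Set.InjOn φ S := by
    intro w hw w' hw' heq
    have hne : ∀ l'' : Fin L, l'' ≠ l → w l'' = w' l'' := by
      intro l'' h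
      have h3 := congrFun heq l''
      simp only [hφdef, Function.update_of_ne h] at h3
      exact h3
    have hupd : Function.update (w l) b m₀ = Function.update (w' l) b m₀ := by
      have h3 := congrFun heq l
      simpa [hφdef] using h3
    have hjne : ∀ j : Fin (Wd l), j ≠ b → w l j = w' l j := by
      intro j hj
      have h3 := congrFun hupd j
      rwa [Function.update_of_ne hj, Function.update_of_ne hj] at h3
    have hzz : z l.val w = z l.val w' :=
      key l.val (le_of_lt l.isLt) w w' (fun l'' h => hne l'' (Fin.ne_of_val_ne (by omega)))
    have huu : (fun j => w l (Fin.castLE (Nat.sub_le (Wd l) (N (l.val + 1))) j))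
        = (fun j => w' l (Fin.castLE (Nat.sub_le (Wd l) (N (l.val + 1))) j)) := by
      funext j
      refine hjne _ (Fin.ne_of_val_ne ?_)
      have hjlt := j.isLt
      simp only [Fin.coe_castLE, hbdef]
      omega
    have hb : w l b = w' l b := by
      have e1 := hyval w
      have e2 := hyval w'
      rw [hw.2] at e1
      rw [hw'.2] at e2
      rw [hzz, huu] at e1
      linarith [e1, e2]
    funext l''
    by_cases h : l'' = l
    · subst h
      funext j
      by_cases hj : j = b
      · subst hj; exact hb
      · exact hjne j hj
    · exact hne l'' h
  -- target set
  set C : (l' : Fin L) → Fin (Wd l') → Set ℝ :=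
    fun l' j => if l' = l ∧ j.val = b.val then {m₀} else M with hCdef
  set T : Set (Params L Wd) := Set.pi Set.univ (fun l' => Set.pi Set.univ (C l')) with hTdef
  have hCfin : ∀ l' j, (C l' j).Finite := by
    intro l' j
    simp only [hCdef]
    split
    · exact Set.finite_singleton _
    · exact hMfin
  have hTfin : T.Finite := Set.Finite.pi (fun l' => Set.Finite.pi (fun j => hCfin l' j))
  have hsub : φ '' S ⊆ T := by
    rintro _ ⟨w, hw, rfl⟩
    intro l' _ j _
    simp only [hCdef]
    by_cases h : l' = l ∧ j.val = b.val
    · rw [if_pos h]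
      obtain ⟨h1, h2⟩ := h
      subst h1
      have hjb : j = b := Fin.ext h2
      subst hjb
      simp [hφdef]
    · rw [if_neg h]
      by_cases h1 : l' = l
      · subst h1
        have h2 : j ≠ b := by
          intro hc; exact h ⟨rfl, by rw [hc]⟩
        simpa [hφdef, Function.update_of_ne h2] using hw.1 _ j
      · simpa [hφdef, Function.update_of_ne h1] using hw.1 l' j
  have hTcard : T.ncard = M.ncard ^ ((∑ l' : Fin L, Wd l') - 1) := by
    rw [hTdef, myNcardPi]
    have hstep : ∀ l' : Fin L, (Set.pi Set.univ (C l')).ncard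
        = M.ncard ^ (if l' = l then Wd l - 1 else Wd l') := by
      intro l'
      rw [myNcardPi]
      by_cases h : l' = l
      · subst h
        rw [if_pos rfl, ← Finset.mul_prod_erase Finset.univ _ (Finset.mem_univ b)]
        have h1 : (C l' b).ncard = 1 := by simp [hCdef]
        have h2 : ∀ j ∈ Finset.univ.erase b, (C l' j).ncard = M.ncard := by
          intro j hj
          have hjb : j ≠ b := Finset.ne_of_mem_erase hj
          simp only [hCdef]
          rw [if_neg (by rintro ⟨-, hc⟩; exact hjb (Fin.ext hc))]
        rw [h1, one_mul, Finset.prod_congr rfl h2, Finset.prod_const,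
          Finset.card_erase_of_mem (Finset.mem_univ b), Finset.card_univ, Fintype.card_fin]
      · rw [if_neg h]
        have h2 : ∀ j : Fin (Wd l'), (C l' j).ncard = M.ncard := by
          intro j
          simp only [hCdef]
          rw [if_neg (by rintro ⟨hc, -⟩; exact h hc)]
        simp [h2]
    rw [Finset.prod_congr rfl (fun l' _ => hstep l'), Finset.prod_pow_eq_pow_sum]
    congr 1
    have hWl : 1 ≤ Wd l := le_trans hk1 hkm
    rw [← Finset.sum_erase_add Finset.univ _ (Finset.mem_univ l),
        ← Finset.sum_erase_add Finset.univ Wd (Finset.mem_univ l)]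
    have h3 : ∑ x ∈ Finset.univ.erase l, (if x = l then Wd l - 1 else Wd x)
        = ∑ x ∈ Finset.univ.erase l, Wd x := by
      apply Finset.sum_congr rfl
      intro x hx
      rw [if_neg (Finset.ne_of_mem_erase hx)]
    rw [h3, if_pos rfl]
    omega
  calc S.ncard = (φ '' S).ncard := (Set.ncard_image_of_injOn hinj).symm
    _ ≤ T.ncard := Set.ncard_le_ncard hsub hTfin
    _ = M.ncard ^ ((∑ l' : Fin L, Wd l') - 1) := hTcard
end

section
/- Let f, f_1, …, f_n : ℝ^d → ℝ^{d′} (n ∈ ℕ), x ∈ ℝ^d, and let U ⊆ ℝ^d be an open neighborhood of x. Suppose: (a) for every y ∈ U there exists i ∈ [n] with f(y) = f_i(y); (b) f(x) = f_i(x) for all i ∈ [n]; and (c) each f_i is differentiable at x and Df_i(x) = Df_j(x) for all i, j ∈ [n]. Then f is differentiable at x and Df(x) = Df_i(x) for all i ∈ [n]. -/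
open Set

/-- If on an open neighborhood `U` of `x` the function `f` agrees at each
point with one of finitely many functions `f_1,…,f_n`, all of which agree with `f` at `x`, are
differentiable at `x`, and have the same derivative there, then `f` is differentiable at `x`
with that common derivative. -/
theorem stmt18 (d d' n : ℕ) (hn : 1 ≤ n)
    (f : (Fin d → ℝ) → Fin d' → ℝ) (F : Fin n → (Fin d → ℝ) → Fin d' → ℝ)
    (x : Fin d → ℝ) (U : Set (Fin d → ℝ)) (hU : IsOpen U) (hxU : x ∈ U)
    (ha : ∀ y ∈ U, ∃ i, f y = F i y)
    (hb : ∀ i, f x = F i x)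
    (hdiff : ∀ i, DifferentiableAt ℝ (F i) x)
    (heq : ∀ i j, fderiv ℝ (F i) x = fderiv ℝ (F j) x) :
    DifferentiableAt ℝ f x ∧ ∀ i, fderiv ℝ f x = fderiv ℝ (F i) x := by
  have i0 : Fin n := ⟨0, hn⟩
  set L := fderiv ℝ (F i0) x with hLdef
  have hL : ∀ i, HasFDerivAt (F i) L x := fun i => by
    rw [hLdef, ← heq i i0]; exact (hdiff i).hasFDerivAt
  have hf : HasFDerivAt f L x := by
    simp only [hasFDerivAt_iff_isLittleO_nhds_zero] at hL ⊢
    rw [Asymptotics.isLittleO_iff]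
    intro c hc
    have h1 : ∀ᶠ h in nhds (0 : Fin d → ℝ),
        ∀ i, ‖F i (x + h) - F i x - L h‖ ≤ c * ‖h‖ := by
      rw [Filter.eventually_all]
      intro i
      exact (hL i).def hc
    have h2 : ∀ᶠ h in nhds (0 : Fin d → ℝ), x + h ∈ U := by
      have : Filter.Tendsto (fun h : Fin d → ℝ => x + h) (nhds 0) (nhds x) := by
        simpa using Filter.Tendsto.const_add x (continuous_id.tendsto (0 : Fin d → ℝ))
      exact this (hU.mem_nhds hxU)
    filter_upwards [h1, h2] with h h1 h2
    obtain ⟨i, hi⟩ := ha _ h2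
    rw [hi, hb i]
    exact h1 i
  refine ⟨hf.differentiableAt, fun i => ?_⟩
  rw [hf.fderiv]; exact heq i0 i
end
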